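/- Define S₀(δ) = (−(36125δ² + 107780δ − 214200))/(38880·(4−δ)²). For every δ with 0 < δ ≤ 8/1167, one has S₀(δ) > 1/4. (Since the derivative of the sigmoid function is everywhere at most 1/4, this shows the lower endpoint of the gradient interval of Proposition 1 exceeds the maximal gradient of an LSTM sigmoid gate.) -/

import Mathlib

/-- For `0 < δ ≤ 8/1167`, the lower endpoint
`S₀(δ) = -(36125δ² + 107780δ - 214200)/(38880(4-δ)²)` of the gradient interval of
Proposition 1 exceeds `1/4`, the maximal derivative of the sigmoid function of an
LSTM gate. -/
theorem bBLSTM5G_S0_gt_quarter (δ : ℝ) (hδ0 : 0 < δ) (hδ : δ ≤ 8 / 1167) :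
    -(36125 * δ ^ 2 + 107780 * δ - 214200) / (38880 * (4 - δ) ^ 2) > 1 / 4 := by
  have hden : 0 < 38880 * (4 - δ) ^ 2 := by
    have : 0 < 4 - δ := by linarith
    positivity
  -- clearing denominators turns the claim into this quadratic bound, which holds on (0, 1/2]
  have hquad : 45845 * δ ^ 2 + 30020 * δ < 58680 := by nlinarith
  rw [gt_iff_lt, lt_div_iff₀ hden]
  linarith
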